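/- In a minimal-counterexample analysis: if G is {3K₁, K₁+C₄}-free with non-adjacent vertices v, w, v of maximum degree Δ, and with the sets A₁, A₂, B₁₁, B₁₂, B₂ as defined, then Δ ≤ 2ω − 2 − |B₂|; in particular Δ(G) ≤ 2ω(G) − 2 for any {3K₁, K₁+C₄}-free non-complete graph where the maximum degree vertex has a non-neighbor. -/

import Mathlib

open SimpleGraph

/-- `G` has no independent set of size 3: among any 3 distinct vertices, some two are adjacent. -/
def ThreeK1Free {V : Type*} (G : SimpleGraph V) : Prop :=
  ∀ a b c : V, a ≠ b → a ≠ c → b ≠ c → G.Adj a b ∨ G.Adj a c ∨ G.Adj b c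

/-- The wheel `K₁ + C₄`: hub `0` joined to the 4-cycle `1-2-3-4-1`. -/
def wheel4 : SimpleGraph (Fin 5) :=
  SimpleGraph.fromRel (fun i j =>
    i = 0 ∨ (i = 1 ∧ j = 2) ∨ (i = 2 ∧ j = 3) ∨ (i = 3 ∧ j = 4) ∨ (i = 4 ∧ j = 1))

/-- `G` has no induced subgraph isomorphic to `K₁ + C₄` (graph embeddings are induced). -/
def K1C4Free {V : Type*} (G : SimpleGraph V) : Prop :=
  IsEmpty (wheel4 ↪g G)


/-!
Let `A` be the common neighbourhood of `v` and `w` and `B` the other neighbours of `v`. In a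
`3K₁`-free graph the non-neighbours of a vertex form a clique; hence `B` (all non-adjacent to `w`)
is a clique. A vertex `a ∈ A₂` adjacent to some `p ∈ A₁` would, together with a `p₀ ∈ A₁` that
`a` misses (maximality of `A₁`), make `p` the hub of a wheel over the induced cycle `a v p₀ w`; so
`A₂` is anticomplete to `A₁` and therefore a clique. Thus `S₁ = A₁ ∪ {b ∈ B | b complete to A₁}`
and `S₂ = A₂ ∪ {b ∈ B | b complete to A₂}` are cliques in `N(v)`, so `|Sᵢ| ≤ ω - 1`. They cover
`N(v)`, since a `b ∈ B` missing both some `a ∈ A₂` and some `p ∈ A₁` would force `a ~ p`, and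
`S₁ ∩ S₂ ⊇ B₂`. Hence `Δ + |B₂| ≤ |S₁| + |S₂| ≤ 2ω - 2`.
-/

theorem Set.ncard_add_ncard_le_of_subset_union_of_subset_inter {α : Type*} [Finite α]
    {s t u w : Set α} (hs : s ⊆ u ∪ w) (ht : t ⊆ u ∩ w) : s.ncard + t.ncard ≤ u.ncard + w.ncard :=
  calc s.ncard + t.ncard ≤ (u ∪ w).ncard + (u ∩ w).ncard :=
        add_le_add (Set.ncard_le_ncard hs) (Set.ncard_le_ncard ht)
    _ = u.ncard + w.ncard := Set.ncard_union_add_ncard_inter u w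

section ForbiddenSubgraphs

variable {V : Type*} {G : SimpleGraph V}

theorem ThreeK1Free.isClique_compl_neighborSet (h3 : ThreeK1Free G) (x : V) :
    G.IsClique (Gᶜ.neighborSet x) := by
  intro a ha b hb hab
  rw [mem_neighborSet, compl_adj] at ha hb
  rcases h3 a b x hab ha.1.symm hb.1.symm with h | h | h
  exacts [h, absurd h.symm ha.2, absurd h.symm hb.2]

theorem ThreeK1Free.isClique_neighborSet_diff_commonNeighbors (h3 : ThreeK1Free G) (v w : V) :
    G.IsClique (G.neighborSet v \ (G.commonNeighbors v w ∪ {w})) :=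
  (h3.isClique_compl_neighborSet w).subset fun b hb =>
    (compl_adj G w b).2 ⟨fun h => hb.2 (Or.inr h.symm), fun h => hb.2 (Or.inl ⟨hb.1, h⟩)⟩

theorem K1C4Free.false_of_adj_induced_cycle (h4 : K1C4Free G) {c x₁ x₂ x₃ x₄ : V}
    (hc₁ : G.Adj c x₁) (hc₂ : G.Adj c x₂) (hc₃ : G.Adj c x₃) (hc₄ : G.Adj c x₄)
    (h₁₂ : G.Adj x₁ x₂) (h₂₃ : G.Adj x₂ x₃) (h₃₄ : G.Adj x₃ x₄) (h₄₁ : G.Adj x₄ x₁)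
    (hne₁₃ : x₁ ≠ x₃) (hne₂₄ : x₂ ≠ x₄) (h₁₃ : ¬ G.Adj x₁ x₃) (h₂₄ : ¬ G.Adj x₂ x₄) :
    False := by
  have := hc₁.ne; have := hc₂.ne; have := hc₃.ne; have := hc₄.ne
  have := h₁₂.ne; have := h₂₃.ne; have := h₃₄.ne; have := h₄₁.ne
  refine h4.false ⟨⟨![c, x₁, x₂, x₃, x₄], fun i j hij => ?_⟩, fun {i j} => ?_⟩
  · fin_cases i <;> fin_cases j <;> simp_all [eq_comm]
  · change G.Adj (![c, x₁, x₂, x₃, x₄] i) (![c, x₁, x₂, x₃, x₄] j) ↔ _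
    fin_cases i <;> fin_cases j <;>
      simp_all [wheel4, fromRel_adj, adj_comm, Fin.ext_iff, -Fin.val_eq_zero_iff]

end ForbiddenSubgraphs

namespace SimpleGraph

variable {V : Type*} {G : SimpleGraph V}

theorem ncard_neighborSet_eq_degree [Fintype V] [DecidableRel G.Adj] (v : V) :
    (G.neighborSet v).ncard = G.degree v := by
  rw [← card_neighborSet_eq_degree, ← Nat.card_eq_fintype_card, Nat.card_coe_set_eq]

theorem IsClique.ncard_add_one_le_cliqueNum [Finite V] {s : Set V} {v : V} (hs : G.IsClique s)
    (hsv : s ⊆ G.neighborSet v) : s.ncard + 1 ≤ G.cliqueNum := by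
  have hv : v ∉ s := fun h => G.irrefl (hsv h)
  rw [← Set.ncard_insert_of_notMem hv, Set.ncard_eq_toFinset_card _ (Set.toFinite _)]
  exact IsClique.card_le_cliqueNum (tc := by simpa using hs.insert fun b hb _ => hsv hb)

theorem IsClique.union_setOf_forall_adj {K B : Set V} (hK : G.IsClique K) (hB : G.IsClique B) :
    G.IsClique (K ∪ {b ∈ B | ∀ a ∈ K, G.Adj b a}) := by
  rintro x (hx | ⟨hxB, hxK⟩) y (hy | ⟨hyB, hyK⟩) hxy
  exacts [hK hx hy hxy, (hyK x hx).symm, hxK y hy, hB hxB hyB hxy]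

theorem exists_not_adj_of_maximal_isClique {A K : Set V}
    (hK : Maximal (fun S => S ⊆ A ∧ G.IsClique S) K) {a : V} (ha : a ∈ A \ K) :
    ∃ p ∈ K, ¬ G.Adj a p := by
  by_contra! h
  have hins : insert a K ⊆ K :=
    hK.2 ⟨Set.insert_subset ha.1 hK.1.1, hK.1.2.insert fun p hp _ => h p hp⟩ (Set.subset_insert a K)
  exact ha.2 (hins (Set.mem_insert a K))

section MaximalCliqueInCommonNeighbors

variable {v w : V} {A₁ : Set V}

theorem not_adj_of_maximal_isClique_commonNeighbors (h4 : K1C4Free G) (hvw : v ≠ w)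
    (hnadj : ¬ G.Adj v w) (hA₁ : Maximal (fun S => S ⊆ G.commonNeighbors v w ∧ G.IsClique S) A₁)
    {a p : V} (ha : a ∈ G.commonNeighbors v w \ A₁) (hp : p ∈ A₁) : ¬ G.Adj a p := by
  intro hap
  obtain ⟨p₀, hp₀, hap₀⟩ := exists_not_adj_of_maximal_isClique hA₁ ha
  have hpp₀ : p ≠ p₀ := by rintro rfl; exact hap₀ hap
  have hap₀ne : a ≠ p₀ := by rintro rfl; exact ha.2 hp₀
  obtain ⟨hva, hwa⟩ := ha.1
  obtain ⟨hvp, hwp⟩ := hA₁.1.1 hp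
  obtain ⟨hvp₀, hwp₀⟩ := hA₁.1.1 hp₀
  -- `p` is the hub of a wheel over the induced 4-cycle `a v p₀ w`
  exact h4.false_of_adj_induced_cycle hap.symm hvp.symm (hA₁.1.2 hp hp₀ hpp₀) hwp.symm
    hva.symm hvp₀ hwp₀.symm hwa hap₀ne hvw hap₀ hnadj

theorem isClique_commonNeighbors_diff_of_maximal (h3 : ThreeK1Free G) (h4 : K1C4Free G)
    (hvw : v ≠ w) (hnadj : ¬ G.Adj v w)
    (hA₁ : Maximal (fun S => S ⊆ G.commonNeighbors v w ∧ G.IsClique S) A₁) :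
    G.IsClique (G.commonNeighbors v w \ A₁) := by
  intro a ha a' ha' haa'
  obtain ⟨p, hp, -⟩ := exists_not_adj_of_maximal_isClique hA₁ ha
  have hcompl {x : V} (hx : x ∈ G.commonNeighbors v w \ A₁) : x ∈ Gᶜ.neighborSet p :=
    (compl_adj G p x).2 ⟨by rintro rfl; exact hx.2 hp,
      fun h => not_adj_of_maximal_isClique_commonNeighbors h4 hvw hnadj hA₁ hx hp h.symm⟩
  exact h3.isClique_compl_neighborSet p (hcompl ha) (hcompl ha') haa'

theorem forall_adj_or_forall_adj_diff_of_maximal (h3 : ThreeK1Free G) (h4 : K1C4Free G)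
    (hvw : v ≠ w) (hnadj : ¬ G.Adj v w)
    (hA₁ : Maximal (fun S => S ⊆ G.commonNeighbors v w ∧ G.IsClique S) A₁)
    {b : V} (hb : b ∉ G.commonNeighbors v w) :
    (∀ p ∈ A₁, G.Adj b p) ∨ ∀ a ∈ G.commonNeighbors v w \ A₁, G.Adj b a := by
  by_contra! ⟨⟨p, hp, hbp⟩, a, ha, hba⟩
  have hcompl {x : V} (hx : x ∈ G.commonNeighbors v w) (hbx : ¬ G.Adj b x) :
      x ∈ Gᶜ.neighborSet b :=
    (compl_adj G b x).2 ⟨by rintro rfl; exact hb hx, hbx⟩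
  exact not_adj_of_maximal_isClique_commonNeighbors h4 hvw hnadj hA₁ ha hp <|
    h3.isClique_compl_neighborSet b (hcompl ha.1 hba) (hcompl (hA₁.1.1 hp) hbp)
      (by rintro rfl; exact ha.2 hp)

end MaximalCliqueInCommonNeighbors

end SimpleGraph

theorem stmt10_general {V : Type*} [Fintype V] (G : SimpleGraph V) [DecidableRel G.Adj]
    (h3 : ThreeK1Free G) (h4 : K1C4Free G)
    (v w : V)
    (hvw : v ≠ w) (hnadj : ¬ G.Adj v w)
    (A A₁ A₂ B B₁₁ B₁₂ B₂ : Set V)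
    (hA : A = G.neighborSet v ∩ G.neighborSet w)
    (hA₁sub : A₁ ⊆ A) (hA₁clq : A₁.Pairwise G.Adj)
    (hA₁max : ∀ S : Set V, A₁ ⊆ S → S ⊆ A → S.Pairwise G.Adj → S = A₁)
    (hA₂ : A₂ = A \ A₁)
    (hB : B = G.neighborSet v \ (A ∪ {w}))
    (hB₁₁ : B₁₁ = {b ∈ B | ∃ a ∈ A₂, ¬ G.Adj b a})
    (hB₁₂ : B₁₂ = {b ∈ B | ∃ a ∈ A₁, ¬ G.Adj b a})
    (hB₂ : B₂ = B \ (B₁₁ ∪ B₁₂)) :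
    G.degree v + B₂.ncard + 2 ≤ 2 * G.cliqueNum ∧
    G.degree v ≤ 2 * G.cliqueNum - 2 := by
  rw [← commonNeighbors_eq] at hA
  have hA₁ : Maximal (fun S => S ⊆ A ∧ G.IsClique S) A₁ :=
    ⟨⟨hA₁sub, hA₁clq⟩, fun S hS hA₁S => (hA₁max S hA₁S hS.1 hS.2).le⟩
  subst hA hA₂ hB hB₁₁ hB₁₂ hB₂
  set A := G.commonNeighbors v w
  set B := G.neighborSet v \ (A ∪ {w})
  set S₁ := A₁ ∪ {b ∈ B | ∀ a ∈ A₁, G.Adj b a}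
  set S₂ := (A \ A₁) ∪ {b ∈ B | ∀ a ∈ A \ A₁, G.Adj b a}
  have hAv : A ⊆ G.neighborSet v := G.commonNeighbors_subset_neighborSet_left v w
  have hBclq := h3.isClique_neighborSet_diff_commonNeighbors v w
  have hS₁ : S₁.ncard + 1 ≤ G.cliqueNum := (hA₁.1.2.union_setOf_forall_adj hBclq)
    |>.ncard_add_one_le_cliqueNum (Set.union_subset (hA₁sub.trans hAv) fun _ hb => hb.1.1)
  have hS₂ : S₂.ncard + 1 ≤ G.cliqueNum :=
    ((isClique_commonNeighbors_diff_of_maximal h3 h4 hvw hnadj hA₁).union_setOf_forall_adj hBclq)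
    |>.ncard_add_one_le_cliqueNum (Set.union_subset (Set.sdiff_subset.trans hAv) fun _ hb => hb.1.1)
  have hcover : G.neighborSet v ⊆ S₁ ∪ S₂ := by
    intro x hx
    by_cases hxA : x ∈ A
    · by_cases hxA₁ : x ∈ A₁
      exacts [Or.inl (Or.inl hxA₁), Or.inr (Or.inl ⟨hxA, hxA₁⟩)]
    · have hxB : x ∈ B := ⟨hx, by rintro (h | rfl); exacts [hxA h, hnadj hx]⟩
      rcases forall_adj_or_forall_adj_diff_of_maximal h3 h4 hvw hnadj hA₁ hxA with h | h
      exacts [Or.inl (Or.inr ⟨hxB, h⟩), Or.inr (Or.inr ⟨hxB, h⟩)]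
  have hB₂ : B \ ({b ∈ B | ∃ a ∈ A \ A₁, ¬ G.Adj b a} ∪ {b ∈ B | ∃ a ∈ A₁, ¬ G.Adj b a})
      ⊆ S₁ ∩ S₂ := by
    rintro b ⟨hb, hb'⟩
    simp only [Set.mem_union, Set.mem_sep_iff, not_or, not_and, not_exists, not_not] at hb'
    exact ⟨Or.inr ⟨hb, hb'.2 hb⟩, Or.inr ⟨hb, hb'.1 hb⟩⟩
  have hsum := Set.ncard_add_ncard_le_of_subset_union_of_subset_inter hcover hB₂
  rw [ncard_neighborSet_eq_degree] at hsum
  omega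

theorem stmt10 {V : Type*} [Fintype V] (G : SimpleGraph V) [DecidableRel G.Adj]
    (h3 : ThreeK1Free G) (h4 : K1C4Free G)
    (v w : V) (hmaxdeg : ∀ u : V, G.degree u ≤ G.degree v)
    (hvw : v ≠ w) (hnadj : ¬ G.Adj v w)
    (A A₁ A₂ B B₁₁ B₁₂ B₂ : Set V)
    (hA : A = G.neighborSet v ∩ G.neighborSet w)
    (hA₁sub : A₁ ⊆ A) (hA₁clq : A₁.Pairwise G.Adj)
    (hA₁max : ∀ S : Set V, A₁ ⊆ S → S ⊆ A → S.Pairwise G.Adj → S = A₁)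
    (hA₂ : A₂ = A \ A₁)
    (hB : B = G.neighborSet v \ (A ∪ {w}))
    (hB₁₁ : B₁₁ = {b ∈ B | ∃ a ∈ A₂, ¬ G.Adj b a})
    (hB₁₂ : B₁₂ = {b ∈ B | ∃ a ∈ A₁, ¬ G.Adj b a})
    (hB₂ : B₂ = B \ (B₁₁ ∪ B₁₂)) :
    G.degree v + B₂.ncard + 2 ≤ 2 * G.cliqueNum ∧
    G.degree v ≤ 2 * G.cliqueNum - 2 :=
  stmt10_general G h3 h4 v w hvw hnadj A A₁ A₂ B B₁₁ B₁₂ B₂ hA hA₁sub hA₁clq hA₁max hA₂ hB hB₁₁ hB₁₂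
    hB₂
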